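/- arXiv:2211.08935 — 2 statements merged into one kernel-verified Lean document; each statement's English description precedes it below -/
import Mathlib

section
/- For a Coxeter element c of a Dynkin root system Φ and the orbit map τ_c = σ_{c_1} ∘ ⋯ ∘ σ_{c_n} on almost positive roots, τ_c is a bijection of Φ_{≥-1}, and for every almost positive root α there exists a non-negative integer R with τ_c^{-R}(α) a negative simple root. -/
/-- A finite crystallographic root system of rank `n`, presented in the root lattice
`ℤ^n` with the simple roots `α_i = e_i` as standard basis vectors. -/
structure CrysRootDatum (n : ℕ) where
  C : Matrix (Fin n) (Fin n) ℤ
  roots : Finset (Fin n → ℤ)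
  diag : ∀ i, C i i = 2
  offdiag : ∀ i j, i ≠ j → C i j ≤ 0
  symmetrizable : ∃ d : Fin n → ℤ, (∀ i, 0 < d i) ∧ ∀ i j, d i * C i j = d j * C j i
  zero_not_mem : (0 : Fin n → ℤ) ∉ roots
  simple_mem : ∀ i, (Pi.single i 1 : Fin n → ℤ) ∈ roots
  sign_coherent : ∀ r ∈ roots, (∀ j, 0 ≤ r j) ∨ (∀ j, r j ≤ 0)
  reflect_mem : ∀ i, ∀ r ∈ roots, (r - (∑ j, C i j * r j) • Pi.single i 1) ∈ roots
  neg_mem : ∀ r ∈ roots, -r ∈ roots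
  reduced : ∀ (c : ℤ) (i : Fin n), c • (Pi.single i 1 : Fin n → ℤ) ∈ roots → c = 1 ∨ c = -1

namespace CrysRootDatum

variable {n : ℕ} (R : CrysRootDatum n)

/-- The simple reflection `s_i` acting on the root lattice. -/
def sref (i : Fin n) (v : Fin n → ℤ) : Fin n → ℤ :=
  v - (∑ j, R.C i j * v j) • Pi.single i 1

/-- `v` is a positive root. -/
def IsPos (v : Fin n → ℤ) : Prop := v ∈ R.roots ∧ ∀ j, 0 ≤ v j

/-- The set `Φ_{≥-1} = Φ⁺ ∪ (-Δ)` of almost positive roots. -/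
def almostPos : Set (Fin n → ℤ) :=
  {v | R.IsPos v ∨ ∃ i, v = -(Pi.single i 1 : Fin n → ℤ)}

open Classical in
/-- The map `σ_i`: it fixes the negative simple roots other than `-α_i`, and acts as
the simple reflection `s_i` otherwise. -/
noncomputable def sigmaMap (i : Fin n) (v : Fin n → ℤ) : Fin n → ℤ :=
  if (∃ j, v = -(Pi.single j 1 : Fin n → ℤ)) ∧ v ≠ -(Pi.single i 1 : Fin n → ℤ)
  then v else R.sref i v

/-- For a Coxeter element `c = c_1 ⋯ c_n` recorded as the list `l = [c_1, …, c_n]`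
(each simple reflection appearing exactly once), the map
`τ_c = σ_{c_1} ∘ σ_{c_2} ∘ ⋯ ∘ σ_{c_n}`. -/
noncomputable def tauC (l : List (Fin n)) (v : Fin n → ℤ) : Fin n → ℤ :=
  l.foldr (fun i u => R.sigmaMap i u) v

end CrysRootDatum

/-!
Each `σ_i` is an involution of the finite set `Φ_{≥-1}`, so `τ_c` is a bijection of it and every
`τ_c`-orbit is periodic; it remains to see that the forward orbit of a positive root `α` meets
`-Δ`. While that orbit stays positive, `τ_c` acts on it as the Coxeter element `c`. If it stayed
positive forever, the sum of the `c^k α` over a period of `c` would be a nonzero vector fixed by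
`c`, hence by every `s_i`, since each occurs exactly once in `c`. But averaging the standard form
over the finite Weyl group gives a `W`-invariant positive definite form, for which a vector fixed
by `s_i` is orthogonal to `α_i = -s_i α_i`; so the only `W`-fixed vector is `0`.
-/

open Matrix Function

theorem Set.InjOn.exists_pos_isPeriodicPt {α : Type*} {f : α → α} {s : Set α}
    (hinj : Set.InjOn f s) (hmaps : Set.MapsTo f s s) (hs : s.Finite) {x : α} (hx : x ∈ s) :
    ∃ p, 0 < p ∧ IsPeriodicPt f p x := by
  obtain ⟨a, b, hab, hfab⟩ :=
    hs.exists_lt_map_eq_of_forall_mem (f := fun k => f^[k] x) fun k => hmaps.iterate k hx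
  refine ⟨b - a, Nat.sub_pos_of_lt hab, (hinj.iterate hmaps a) (hmaps.iterate _ hx) hx ?_⟩
  rw [← iterate_add_apply, Nat.add_sub_cancel' hab.le]
  exact hfab.symm

theorem Matrix.mulVec_sum_range_pow_mulVec {ι R : Type*} [Fintype ι] [DecidableEq ι] [CommRing R]
    {A : Matrix ι ι R} {N : ℕ} (hA : A ^ N = 1) (v : ι → R) :
    A *ᵥ ∑ k ∈ Finset.range N, (A ^ k) *ᵥ v = ∑ k ∈ Finset.range N, (A ^ k) *ᵥ v := by
  have hshift := Finset.sum_range_succ' (fun k => (A ^ k) *ᵥ v) N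
  rw [Finset.sum_range_succ, hA, pow_zero] at hshift
  simp only [mulVec_sum, mulVec_mulVec, ← pow_succ']
  exact add_right_cancel hshift.symm

section InvariantGram

variable {G ι R : Type*} [Group G] [Fintype G] [Fintype ι] [DecidableEq ι] [CommRing R]
  (ρ : G →* Matrix ι ι R)

def invariantGram : Matrix ι ι R := ∑ g, (ρ g)ᵀ * ρ g

theorem dotProduct_invariantGram_mulVec (x y : ι → R) :
    x ⬝ᵥ (invariantGram ρ *ᵥ y) = ∑ g, (ρ g *ᵥ x) ⬝ᵥ (ρ g *ᵥ y) := by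
  simp only [invariantGram, sum_mulVec, dotProduct_sum, ← mulVec_mulVec, dotProduct_mulVec,
    vecMul_transpose]

theorem invariantGram_mulVec_invariant (s : G) (x y : ι → R) :
    (ρ s *ᵥ x) ⬝ᵥ (invariantGram ρ *ᵥ (ρ s *ᵥ y)) = x ⬝ᵥ (invariantGram ρ *ᵥ y) := by
  rw [dotProduct_invariantGram_mulVec, dotProduct_invariantGram_mulVec]
  simp only [mulVec_mulVec, ← map_mul]
  exact Equiv.sum_comp (Equiv.mulRight s) fun g => (ρ g *ᵥ x) ⬝ᵥ (ρ g *ᵥ y)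

theorem eq_zero_of_invariantGram_mulVec_eq_zero [LinearOrder R] [IsStrictOrderedRing R]
    {v : ι → R} (h : invariantGram ρ *ᵥ v = 0) : v = 0 := by
  have hsum := dotProduct_invariantGram_mulVec ρ v v
  have hnonneg (g : G) : 0 ≤ (ρ g *ᵥ v) ⬝ᵥ (ρ g *ᵥ v) :=
    Fintype.sum_nonneg fun _ => mul_self_nonneg _
  rw [h, dotProduct_zero, eq_comm, Fintype.sum_eq_zero_iff_of_nonneg hnonneg] at hsum
  simpa using congrFun hsum 1

end InvariantGram

namespace CrysRootDatum

variable {n : ℕ} (R : CrysRootDatum n)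

theorem sref_apply_of_ne {i j : Fin n} (hij : j ≠ i) (v : Fin n → ℤ) : R.sref i v j = v j := by
  simp [sref, Pi.single_eq_of_ne hij]

theorem sref_apply_self (i : Fin n) (v : Fin n → ℤ) : R.sref i v i = v i - R.C i ⬝ᵥ v := by
  simp [sref, dotProduct]

theorem sref_eq_self_iff {i : Fin n} {v : Fin n → ℤ} : R.sref i v = v ↔ R.C i ⬝ᵥ v = 0 := by
  constructor
  · intro h
    simpa [R.sref_apply_self] using congrFun h i
  · intro h
    simp [sref, show ∑ j, R.C i j * v j = 0 from h]

theorem C_dotProduct_sref (i : Fin n) (v : Fin n → ℤ) :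
    R.C i ⬝ᵥ R.sref i v = -(R.C i ⬝ᵥ v) := by
  simp only [sref, dotProduct_sub, dotProduct_smul, dotProduct_single, R.diag, smul_eq_mul]
  simp only [dotProduct]
  ring

theorem sref_sref (i : Fin n) (v : Fin n → ℤ) : R.sref i (R.sref i v) = v := by
  conv_lhs => rw [sref]
  rw [show ∑ j, R.C i j * R.sref i v j = -(R.C i ⬝ᵥ v) from R.C_dotProduct_sref i v]
  simp [sref, dotProduct]

theorem sref_single_self (i : Fin n) : R.sref i (Pi.single i 1) = -Pi.single i 1 := by
  ext j
  rcases eq_or_ne j i with rfl | hj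
  · simp [R.sref_apply_self, R.diag]
  · simp [R.sref_apply_of_ne hj, Pi.single_eq_of_ne hj]

theorem sref_neg_single_self (i : Fin n) : R.sref i (-Pi.single i 1) = Pi.single i 1 := by
  rw [← R.sref_single_self, R.sref_sref]

theorem ne_zero_of_mem_roots {v : Fin n → ℤ} (hv : v ∈ R.roots) : v ≠ 0 :=
  fun h => R.zero_not_mem (h ▸ hv)

theorem isPos_single (i : Fin n) : R.IsPos (Pi.single i 1) :=
  ⟨R.simple_mem i, fun j => by rcases eq_or_ne j i with rfl | h <;> simp [*]⟩

theorem ne_neg_single_of_isPos {v : Fin n → ℤ} (hv : R.IsPos v) (j : Fin n) : v ≠ -Pi.single j 1 :=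
  fun h => by simpa [h] using hv.2 j

/-- A positive root sent to a negative one is supported on `i` alone, hence is `α_i` as the root
system is reduced. -/
theorem isPos_sref {v : Fin n → ℤ} (hv : R.IsPos v) {i : Fin n} (hne : v ≠ Pi.single i 1) :
    R.IsPos (R.sref i v) := by
  have hmem : R.sref i v ∈ R.roots := R.reflect_mem i v hv.1
  refine ⟨hmem, (R.sign_coherent _ hmem).resolve_right fun hneg => ?_⟩
  have hsupp : v = v i • Pi.single i 1 := by
    ext j
    rcases eq_or_ne j i with rfl | hj
    · simp
    · have := hneg j
      rw [R.sref_apply_of_ne hj] at this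
      simp [Pi.single_eq_of_ne hj, le_antisymm this (hv.2 j)]
  rcases R.reduced (v i) i (hsupp ▸ hv.1) with h1 | h1
  · exact hne (by rw [hsupp, h1, one_smul])
  · have := hv.2 i
    omega

theorem sigmaMap_of_isPos (i : Fin n) {v : Fin n → ℤ} (hv : R.IsPos v) :
    R.sigmaMap i v = R.sref i v :=
  if_neg fun ⟨⟨j, hj⟩, _⟩ => R.ne_neg_single_of_isPos hv j hj

theorem sigmaMap_neg_single_of_ne {i j : Fin n} (hij : j ≠ i) :
    R.sigmaMap i (-Pi.single j 1) = -Pi.single j 1 := by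
  refine if_pos ⟨⟨j, rfl⟩, fun h => hij ?_⟩
  simpa [Pi.single_apply] using congrFun h j

theorem sigmaMap_neg_single_self (i : Fin n) : R.sigmaMap i (-Pi.single i 1) = Pi.single i 1 := by
  rw [sigmaMap, if_neg (fun h => h.2 rfl), R.sref_neg_single_self]

theorem sigmaMap_single_self (i : Fin n) : R.sigmaMap i (Pi.single i 1) = -Pi.single i 1 := by
  rw [R.sigmaMap_of_isPos i (R.isPos_single i), R.sref_single_self]

theorem mem_roots_of_mem_almostPos {v : Fin n → ℤ} (hv : v ∈ R.almostPos) : v ∈ R.roots := by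
  rcases hv with hv | ⟨i, rfl⟩
  · exact hv.1
  · exact R.neg_mem _ (R.simple_mem i)

theorem single_mem_almostPos (i : Fin n) : Pi.single i 1 ∈ R.almostPos :=
  Or.inl (R.isPos_single i)

theorem almostPos_finite : R.almostPos.Finite :=
  R.roots.finite_toSet.subset fun _ => R.mem_roots_of_mem_almostPos

theorem sigmaMap_mapsTo (i : Fin n) : Set.MapsTo (R.sigmaMap i) R.almostPos R.almostPos := by
  rintro v (hv | ⟨j, rfl⟩)
  · rcases eq_or_ne v (Pi.single i 1) with rfl | hne
    · exact Or.inr ⟨i, R.sigmaMap_single_self i⟩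
    · exact Or.inl (R.sigmaMap_of_isPos i hv ▸ R.isPos_sref hv hne)
  · rcases eq_or_ne j i with rfl | hj
    · rw [R.sigmaMap_neg_single_self]
      exact R.single_mem_almostPos j
    · exact Or.inr ⟨j, R.sigmaMap_neg_single_of_ne hj⟩

theorem sigmaMap_sigmaMap (i : Fin n) {v : Fin n → ℤ} (hv : v ∈ R.almostPos) :
    R.sigmaMap i (R.sigmaMap i v) = v := by
  rcases hv with hv | ⟨j, rfl⟩
  · rcases eq_or_ne v (Pi.single i 1) with rfl | hne
    · rw [R.sigmaMap_single_self, R.sigmaMap_neg_single_self]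
    · rw [R.sigmaMap_of_isPos i hv, R.sigmaMap_of_isPos i (R.isPos_sref hv hne), R.sref_sref]
  · rcases eq_or_ne j i with rfl | hj
    · rw [R.sigmaMap_neg_single_self, R.sigmaMap_single_self]
    · rw [R.sigmaMap_neg_single_of_ne hj, R.sigmaMap_neg_single_of_ne hj]

theorem sigmaMap_bijOn (i : Fin n) : Set.BijOn (R.sigmaMap i) R.almostPos R.almostPos :=
  Set.InvOn.bijOn ⟨fun _ => R.sigmaMap_sigmaMap i, fun _ => R.sigmaMap_sigmaMap i⟩
    (R.sigmaMap_mapsTo i) (R.sigmaMap_mapsTo i)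

theorem tauC_cons (i : Fin n) (l : List (Fin n)) (v : Fin n → ℤ) :
    R.tauC (i :: l) v = R.sigmaMap i (R.tauC l v) := rfl

theorem tauC_bijOn (l : List (Fin n)) : Set.BijOn (R.tauC l) R.almostPos R.almostPos := by
  induction l with
  | nil => exact Set.bijOn_id _
  | cons i l ih => exact (R.sigmaMap_bijOn i).comp ih

def srefMatrix (i : Fin n) : Matrix (Fin n) (Fin n) ℤ :=
  1 - vecMulVec (Pi.single i 1) (R.C i)

theorem srefMatrix_mulVec (i : Fin n) (v : Fin n → ℤ) : R.srefMatrix i *ᵥ v = R.sref i v := by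
  ext j
  simp [srefMatrix, sub_mulVec, vecMulVec_mulVec, sref, dotProduct, mul_comm]

theorem srefMatrix_mul_self (i : Fin n) : R.srefMatrix i * R.srefMatrix i = 1 :=
  mulVec_injective <| funext fun v => by
    rw [← mulVec_mulVec, R.srefMatrix_mulVec, R.srefMatrix_mulVec, R.sref_sref, one_mulVec]

def srefUnit (i : Fin n) : GL (Fin n) ℤ :=
  ⟨R.srefMatrix i, R.srefMatrix i, R.srefMatrix_mul_self i, R.srefMatrix_mul_self i⟩

theorem srefUnit_mulVec (i : Fin n) (v : Fin n → ℤ) :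
    ((R.srefUnit i : GL (Fin n) ℤ) : Matrix (Fin n) (Fin n) ℤ) *ᵥ v = R.sref i v :=
  R.srefMatrix_mulVec i v

theorem srefUnit_inv (i : Fin n) : (R.srefUnit i)⁻¹ = R.srefUnit i :=
  inv_eq_of_mul_eq_one_right (Units.ext (R.srefMatrix_mul_self i))

def weylGroup : Subgroup (GL (Fin n) ℤ) := Subgroup.closure (Set.range R.srefUnit)

theorem srefUnit_mem_weylGroup (i : Fin n) : R.srefUnit i ∈ R.weylGroup :=
  Subgroup.subset_closure ⟨i, rfl⟩

theorem mulVec_mem_roots_of_mem_weylGroup {g : GL (Fin n) ℤ} (hg : g ∈ R.weylGroup) :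
    ∀ r ∈ R.roots, (g : Matrix (Fin n) (Fin n) ℤ) *ᵥ r ∈ R.roots := by
  induction hg using Subgroup.closure_induction_left with
  | one => simp
  | mul_left _ hs _ _ ih | inv_mul_cancel _ hs _ _ ih =>
    obtain ⟨i, rfl⟩ := hs
    intro r hr
    simp only [Units.val_mul, R.srefUnit_inv, ← mulVec_mulVec, R.srefUnit_mulVec]
    exact R.reflect_mem i _ (ih r hr)

/-- An element of the Weyl group is determined by its images of the simple roots, which are
roots. -/
instance : Finite R.weylGroup := by
  refine Finite.of_injective (β := Fin n → R.roots)
    (fun g j => ⟨((g : GL (Fin n) ℤ) : Matrix (Fin n) (Fin n) ℤ) *ᵥ Pi.single j 1,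
      R.mulVec_mem_roots_of_mem_weylGroup g.2 _ (R.simple_mem j)⟩) fun g h hgh => ?_
  exact Subtype.ext <| Units.ext <| ext_of_mulVec_single fun j =>
    congrArg Subtype.val (congrFun hgh j)

noncomputable instance : Fintype R.weylGroup := Fintype.ofFinite _

def weylRep : R.weylGroup →* Matrix (Fin n) (Fin n) ℤ :=
  (Units.coeHom _).comp R.weylGroup.subtype

theorem weylRep_srefUnit (i : Fin n) :
    R.weylRep ⟨R.srefUnit i, R.srefUnit_mem_weylGroup i⟩ = R.srefMatrix i :=
  rfl

theorem eq_zero_of_forall_sref_eq_self {v : Fin n → ℤ} (h : ∀ i, R.sref i v = v) : v = 0 := by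
  refine eq_zero_of_invariantGram_mulVec_eq_zero R.weylRep (funext fun i => ?_)
  have hinv := invariantGram_mulVec_invariant R.weylRep ⟨_, R.srefUnit_mem_weylGroup i⟩
    (Pi.single i 1) v
  rw [R.weylRep_srefUnit, R.srefMatrix_mulVec, R.srefMatrix_mulVec, R.sref_single_self, h i,
    neg_dotProduct, single_dotProduct, one_mul] at hinv
  simp only [Pi.zero_apply]
  linarith

def coxeterMatrix (l : List (Fin n)) : Matrix (Fin n) (Fin n) ℤ := (l.map R.srefMatrix).prod

theorem coxeterMatrix_cons_mulVec (i : Fin n) (l : List (Fin n)) (v : Fin n → ℤ) :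
    R.coxeterMatrix (i :: l) *ᵥ v = R.sref i (R.coxeterMatrix l *ᵥ v) := by
  rw [coxeterMatrix, List.map_cons, List.prod_cons, ← mulVec_mulVec, R.srefMatrix_mulVec]
  rfl

theorem coxeterMatrix_mem_mrange_weylRep (l : List (Fin n)) :
    R.coxeterMatrix l ∈ MonoidHom.mrange R.weylRep :=
  Submonoid.list_prod_mem _ <| by
    simpa only [List.mem_map] using fun _ ⟨i, _, hi⟩ => hi ▸ ⟨_, R.weylRep_srefUnit i⟩

theorem exists_pow_coxeterMatrix_eq_one (l : List (Fin n)) :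
    ∃ N, 0 < N ∧ R.coxeterMatrix l ^ N = 1 := by
  obtain ⟨g, hg⟩ := R.coxeterMatrix_mem_mrange_weylRep l
  obtain ⟨N, hN, hpow⟩ := (isOfFinOrder_of_finite g).exists_pow_eq_one
  exact ⟨N, hN, by rw [← hg, ← map_pow, hpow, map_one]⟩

theorem coxeterMatrix_mulVec_apply_of_not_mem {l : List (Fin n)} {j : Fin n} (hj : j ∉ l)
    (v : Fin n → ℤ) : (R.coxeterMatrix l *ᵥ v) j = v j := by
  induction l with
  | nil => simp [coxeterMatrix]
  | cons i l ih =>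
    rw [List.mem_cons, not_or] at hj
    rw [R.coxeterMatrix_cons_mulVec, R.sref_apply_of_ne hj.1, ih hj.2]

/-- Peeling off the first reflection `s_i`: the rest of the product does not move the
`i`-th coordinate, so `c v = v` forces `(s_i v)_i = v_i`, i.e. `s_i v = v`. -/
theorem sref_eq_self_of_coxeterMatrix_mulVec_eq_self {l : List (Fin n)} (hnd : l.Nodup)
    {v : Fin n → ℤ} (hv : R.coxeterMatrix l *ᵥ v = v) :
    ∀ i ∈ l, R.sref i v = v := by
  induction l with
  | nil => simp
  | cons i l ih =>
    obtain ⟨hil, hnd⟩ := List.nodup_cons.mp hnd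
    rw [R.coxeterMatrix_cons_mulVec] at hv
    have hrest : R.coxeterMatrix l *ᵥ v = R.sref i v := by
      conv_rhs => rw [← hv, R.sref_sref]
    have hi : R.sref i v = v := by
      rw [R.sref_eq_self_iff]
      have := R.coxeterMatrix_mulVec_apply_of_not_mem hil v
      rw [hrest, R.sref_apply_self] at this
      omega
    rw [hi] at hrest
    exact List.forall_mem_cons.mpr ⟨hi, ih hnd hrest⟩

theorem eq_zero_of_coxeterMatrix_mulVec_eq_self {l : List (Fin n)} (hnd : l.Nodup)
    (hall : ∀ i, i ∈ l) {v : Fin n → ℤ}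
    (hv : R.coxeterMatrix l *ᵥ v = v) : v = 0 :=
  R.eq_zero_of_forall_sref_eq_self fun i =>
    R.sref_eq_self_of_coxeterMatrix_mulVec_eq_self hnd hv i (hall i)

theorem tauC_eq_coxeterMatrix_mulVec_or_neg_single {l : List (Fin n)} (hnd : l.Nodup)
    {v : Fin n → ℤ} (hv : R.IsPos v) :
    (R.tauC l v = R.coxeterMatrix l *ᵥ v ∧ R.IsPos (R.tauC l v)) ∨
      ∃ i ∈ l, R.tauC l v = -Pi.single i 1 := by
  induction l with
  | nil => exact Or.inl ⟨(one_mulVec v).symm, hv⟩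
  | cons i l ih =>
    obtain ⟨hil, hnd⟩ := List.nodup_cons.mp hnd
    rw [R.tauC_cons, R.coxeterMatrix_cons_mulVec]
    rcases ih hnd with ⟨heq, hpos⟩ | ⟨j, hjl, heq⟩
    · rcases eq_or_ne (R.tauC l v) (Pi.single i 1) with hsi | hne
      · exact Or.inr ⟨i, List.mem_cons_self, by rw [hsi, R.sigmaMap_single_self]⟩
      · rw [R.sigmaMap_of_isPos i hpos, ← heq]
        exact Or.inl ⟨rfl, R.isPos_sref hpos hne⟩
    · have hji : j ≠ i := fun h => hil (h ▸ hjl)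
      exact Or.inr ⟨j, List.mem_cons_of_mem i hjl, by rw [heq, R.sigmaMap_neg_single_of_ne hji]⟩

theorem iterate_tauC_eq_pow_mulVec {l : List (Fin n)} (hnd : l.Nodup) {α : Fin n → ℤ}
    (hα : R.IsPos α) (hne : ∀ k i, (R.tauC l)^[k] α ≠ -Pi.single i 1) (k : ℕ) :
    (R.tauC l)^[k] α = R.coxeterMatrix l ^ k *ᵥ α ∧
      R.IsPos ((R.tauC l)^[k] α) := by
  induction k with
  | zero => exact ⟨(one_mulVec α).symm, hα⟩
  | succ k ih =>
    rw [iterate_succ_apply', pow_succ', ← mulVec_mulVec, ← ih.1]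
    rcases R.tauC_eq_coxeterMatrix_mulVec_or_neg_single hnd ih.2 with h | ⟨i, -, h⟩
    · exact h
    · exact absurd (by rw [iterate_succ_apply', h]) (hne (k + 1) i)

theorem exists_iterate_tauC_eq_neg_single {l : List (Fin n)} (hnd : l.Nodup)
    (hall : ∀ i, i ∈ l) {α : Fin n → ℤ} (hα : α ∈ R.almostPos) :
    ∃ k i, (R.tauC l)^[k] α = -Pi.single i 1 := by
  obtain hα | ⟨i, rfl⟩ := hα
  swap
  · exact ⟨0, i, rfl⟩
  by_contra! hne
  have horbit := R.iterate_tauC_eq_pow_mulVec hnd hα hne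
  obtain ⟨N, hN, hcN⟩ := R.exists_pow_coxeterMatrix_eq_one l
  set c := R.coxeterMatrix l
  have hsum : ∑ k ∈ Finset.range N, c ^ k *ᵥ α = 0 :=
    R.eq_zero_of_coxeterMatrix_mulVec_eq_self hnd hall (mulVec_sum_range_pow_mulVec hcN α)
  refine R.ne_zero_of_mem_roots hα.1 (funext fun j => le_antisymm ?_ (hα.2 j))
  have hle := Finset.single_le_sum (f := fun k => (c ^ k *ᵥ α) j)
    (fun k _ => (horbit k).1 ▸ (horbit k).2.2 j) (Finset.mem_range.mpr hN)
  simpa [← Finset.sum_apply, hsum] using hle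

end CrysRootDatum

/-- For a Coxeter element `c` of a Dynkin root system `Φ`, the map
`τ_c = σ_{c_1} ∘ ⋯ ∘ σ_{c_n}` is a bijection of the set `Φ_{≥-1}` of almost positive
roots, and for every almost positive root `α` there is a non-negative integer `R`
such that `τ_c^{-R}(α)` is a negative simple root (equivalently, `α` is some forward
`τ_c`-iterate of a negative simple root). -/
theorem tauC_bijOn_and_reaches_negative_simple {n : ℕ} (R : CrysRootDatum n)
    (l : List (Fin n)) (hnd : l.Nodup) (hall : ∀ i, i ∈ l) :
    Set.BijOn (R.tauC l) R.almostPos R.almostPos ∧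
    ∀ α ∈ R.almostPos, ∃ (m : ℕ) (i : Fin n),
      (R.tauC l)^[m] (-(Pi.single i 1 : Fin n → ℤ)) = α := by
  refine ⟨R.tauC_bijOn l, fun α hα => ?_⟩
  obtain ⟨k, i, hk⟩ := R.exists_iterate_tauC_eq_neg_single hnd hall hα
  obtain ⟨p, hp, hper⟩ := (R.tauC_bijOn l).injOn.exists_pos_isPeriodicPt
    (R.tauC_bijOn l).mapsTo R.almostPos_finite hα
  refine ⟨p * k - k, i, ?_⟩
  rw [← hk, ← iterate_add_apply, Nat.sub_add_cancel (Nat.le_mul_of_pos_left k hp)]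
  exact (hper.mul_const k).eq
end

section
/- The sink-mutation periodicity of B^c: for the skew-symmetrizable matrix B^c associated with a Coxeter element c = c_1⋯c_n, the composite mutation μ_{c_1} ∘ ⋯ ∘ μ_{c_n} applied to the extended matrix [B^c; I_n] yields [B^c; -I_n]; each μ_{c_i} in this sequence is a sink mutation. -/
/-- Mutation in direction `k` of an extended integer matrix (rows `Fin n ⊕ Fin n`). -/
def extMut {n : ℕ} (A : Matrix (Fin n ⊕ Fin n) (Fin n) ℤ) (k : Fin n) :
    Matrix (Fin n ⊕ Fin n) (Fin n) ℤ :=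
  fun i j => if i = Sum.inl k ∨ j = k then -A i j
    else A i j + max (A i k) 0 * A (Sum.inl k) j + A i k * max (-A (Sum.inl k) j) 0

/-- The extended matrix `[B; I_n]`. -/
def extOf {n : ℕ} (B : Matrix (Fin n) (Fin n) ℤ) : Matrix (Fin n ⊕ Fin n) (Fin n) ℤ :=
  fun i j => Sum.elim (fun r => B r j) (fun r => if r = j then 1 else 0) i

/-- The skew-symmetrizable matrix `B^c` attached to a Cartan matrix `C` and a Coxeter
element `c = c_1 ⋯ c_n`, with `c_k = s_{w k}` for a permutation `w` of the indices:
`b_ii = 0`, `b_ij = C_ij` if `s_j` precedes `s_i` in `c`, and `b_ij = -C_ij` otherwise. -/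
def Bc {n : ℕ} (C : Matrix (Fin n) (Fin n) ℤ) (w : Equiv.Perm (Fin n)) :
    Matrix (Fin n) (Fin n) ℤ :=
  fun i j => if i = j then 0 else if w.symm j < w.symm i then C i j else -C i j

/-- The word `c_1, …, c_n` of the Coxeter element. -/
def coxWord {n : ℕ} (w : Equiv.Perm (Fin n)) : List (Fin n) := List.ofFn fun k => w k

/-- `coxState C w k` is the extended matrix obtained from `[B^c; I_n]` by applying the
mutations `μ_{c_n}, …, μ_{c_{k+1}}` (so `coxState C w n = [B^c; I_n]` and
`coxState C w 0 = (μ_{c_1} ∘ ⋯ ∘ μ_{c_n})([B^c; I_n])`). -/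
def coxState {n : ℕ} (C : Matrix (Fin n) (Fin n) ℤ) (w : Equiv.Perm (Fin n)) (k : ℕ) :
    Matrix (Fin n ⊕ Fin n) (Fin n) ℤ :=
  ((coxWord w).drop k).foldr (fun idx A => extMut A idx) (extOf (Bc C w))

/-!
A mutation at a sink (pivot row nonpositive, pivot column nonnegative off the pivot) changes
nothing but the signs of the pivot row and column. Let `D_k` be the diagonal sign matrix that is
`-1` exactly at `c_{k+1}, …, c_n`. Going down from `k = n`, the matrix after
`μ_{c_n}, …, μ_{c_{k+1}}` is `[D_k B^c D_k; D_k]`: in it `c_k` is a sink, because the row of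
`B^c` at `c_k` is `≤ 0` at the letters before `c_k` and `≥ 0` at those after it, which `D_k`
has negated. At the end `D_0 = -I`.
-/

open Matrix

lemma extMut_of_sink {n : ℕ} {A : Matrix (Fin n ⊕ Fin n) (Fin n) ℤ} {k : Fin n}
    (hrow : ∀ j, A (Sum.inl k) j ≤ 0) (hcol : ∀ i, i ≠ Sum.inl k → 0 ≤ A i k) :
    extMut A k = fun i j => if i = Sum.inl k ∨ j = k then -A i j else A i j := by
  funext i j
  unfold extMut
  split_ifs with h
  · rfl
  · obtain ⟨hi, -⟩ := not_or.1 h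
    rw [max_eq_left (hcol i hi), max_eq_left (neg_nonneg.2 (hrow j))]
    ring

def signTwist {n : ℕ} (B : Matrix (Fin n) (Fin n) ℤ) (ε : Fin n → ℤ) :
    Matrix (Fin n ⊕ Fin n) (Fin n) ℤ :=
  fromRows (diagonal ε * B * diagonal ε) (diagonal ε)

section signTwist

variable {n : ℕ} {B : Matrix (Fin n) (Fin n) ℤ} {ε : Fin n → ℤ}

lemma signTwist_apply_inl (i j : Fin n) :
    signTwist B ε (Sum.inl i) j = ε i * B i j * ε j := by
  simp [signTwist, diagonal_mul, mul_diagonal]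

lemma signTwist_apply_inr (i j : Fin n) :
    signTwist B ε (Sum.inr i) j = diagonal ε i j := rfl

lemma extOf_eq_signTwist_one (B : Matrix (Fin n) (Fin n) ℤ) : extOf B = signTwist B 1 := by
  funext i j
  cases i <;> simp [extOf, signTwist_apply_inl, signTwist_apply_inr, diagonal_apply]

lemma extMut_signTwist {k : Fin n} (hB : B k k = 0)
    (hrow : ∀ j, signTwist B ε (Sum.inl k) j ≤ 0)
    (hcol : ∀ i, i ≠ Sum.inl k → 0 ≤ signTwist B ε i k) :
    extMut (signTwist B ε) k = signTwist B (Function.update ε k (-ε k)) := by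
  rw [extMut_of_sink hrow hcol]
  funext i j
  cases i with
  | inl r =>
    simp only [signTwist_apply_inl, Sum.inl.injEq, Function.update_apply]
    by_cases hr : r = k <;> by_cases hj : j = k <;> simp [hr, hj, hB]
  | inr r =>
    simp only [signTwist_apply_inr, diagonal_apply, reduceCtorEq, false_or,
      Function.update_apply]
    by_cases hr : r = k <;> by_cases hj : j = k <;> simp [hr, hj, eq_comm (a := k)]

end signTwist

/-- The diagonal of `D_k`: `-1` exactly at the vertices already mutated in `coxState C w k`. -/
def coxSign {n : ℕ} (w : Equiv.Perm (Fin n)) (k : ℕ) : Fin n → ℤ :=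
  fun a => if k ≤ w.symm a then -1 else 1

section Coxeter

variable {n : ℕ} {C : Matrix (Fin n) (Fin n) ℤ} {w : Equiv.Perm (Fin n)}

lemma coxSign_succ_apply_self (k : Fin n) : coxSign w (k + 1) (w k) = 1 := by
  simp [coxSign]

lemma coxSign_eq_update (k : Fin n) :
    coxSign w k = Function.update (coxSign w (k + 1)) (w k) (-coxSign w (k + 1) (w k)) := by
  funext a
  rw [coxSign_succ_apply_self, Function.update_apply]
  split_ifs with ha
  · simp [coxSign, ha]
  · have : (w.symm a : ℕ) ≠ k := fun h => ha (by rw [← Fin.ext h, Equiv.apply_symm_apply])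
    simp only [coxSign]
    split_ifs <;> omega

lemma Bc_nonpos_of_lt (hoff : ∀ i j, i ≠ j → C i j ≤ 0) {i j : Fin n}
    (h : w.symm j < w.symm i) : Bc C w i j ≤ 0 := by
  have hij : i ≠ j := by rintro rfl; exact lt_irrefl _ h
  simpa [Bc, hij, h] using hoff i j hij

lemma Bc_nonneg_of_lt (hoff : ∀ i j, i ≠ j → C i j ≤ 0) {i j : Fin n}
    (h : w.symm i < w.symm j) : 0 ≤ Bc C w i j := by
  have hij : i ≠ j := by rintro rfl; exact lt_irrefl _ h
  simpa [Bc, hij, not_lt.2 h.le] using hoff i j hij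

lemma signTwist_Bc_row_nonpos (hoff : ∀ i j, i ≠ j → C i j ≤ 0) (k j : Fin n) :
    signTwist (Bc C w) (coxSign w (k + 1)) (Sum.inl (w k)) j ≤ 0 := by
  rw [signTwist_apply_inl, coxSign_succ_apply_self, one_mul]
  rcases lt_trichotomy (w.symm j) k with h | h | h
  · have hb := Bc_nonpos_of_lt hoff (w := w) (i := w k) (j := j) (by rwa [Equiv.symm_apply_apply])
    have hs : coxSign w (k + 1) j = 1 := if_neg (by omega)
    simpa [hs] using hb
  · simp [← h, Bc]
  · have hb := Bc_nonneg_of_lt hoff (w := w) (i := w k) (j := j) (by rwa [Equiv.symm_apply_apply])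
    have hs : coxSign w (k + 1) j = -1 := if_pos (by omega)
    simpa [hs] using hb

lemma signTwist_Bc_col_nonneg (hoff : ∀ i j, i ≠ j → C i j ≤ 0) (k : Fin n)
    (i : Fin n ⊕ Fin n) (hi : i ≠ Sum.inl (w k)) :
    0 ≤ signTwist (Bc C w) (coxSign w (k + 1)) i (w k) := by
  cases i with
  | inl r =>
    rw [signTwist_apply_inl, coxSign_succ_apply_self, mul_one]
    rcases lt_trichotomy (w.symm r) k with h | h | h
    · have hb : 0 ≤ Bc C w r (w k) := Bc_nonneg_of_lt hoff (by simpa using h)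
      have hs : coxSign w (k + 1) r = 1 := if_neg (by omega)
      simpa [hs] using hb
    · exact absurd (by rw [← h, Equiv.apply_symm_apply]) hi
    · have hb : Bc C w r (w k) ≤ 0 := Bc_nonpos_of_lt hoff (by simpa using h)
      have hs : coxSign w (k + 1) r = -1 := if_pos (by omega)
      simpa [hs] using hb
  | inr r =>
    rw [signTwist_apply_inr, diagonal_apply]
    split_ifs with h
    · rw [h, coxSign_succ_apply_self]; exact zero_le_one
    · exact le_rfl

lemma coxState_self : coxState C w n = extOf (Bc C w) := by
  rw [coxState, List.drop_of_length_le (by simp [coxWord]), List.foldr_nil]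

lemma coxState_eq_extMut (k : Fin n) :
    coxState C w k = extMut (coxState C w (k + 1)) (w k) := by
  have hk : (k : ℕ) < (coxWord w).length := by simp [coxWord]
  rw [coxState, coxState, List.drop_eq_getElem_cons hk, List.foldr_cons]
  simp [coxWord]

lemma coxState_eq_signTwist (hoff : ∀ i j, i ≠ j → C i j ≤ 0) {k : ℕ} (hk : k ≤ n) :
    coxState C w k = signTwist (Bc C w) (coxSign w k) := by
  induction hk using Nat.decreasingInduction with
  | self =>
    rw [coxState_self, extOf_eq_signTwist_one]
    congr
    funext a
    simp [coxSign]
  | of_succ k hk ih =>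
    have hstep := coxState_eq_extMut (C := C) (w := w) ⟨k, hk⟩
    have hsign := coxSign_eq_update (w := w) ⟨k, hk⟩
    rw [hstep, ih, hsign]
    have hdiag : Bc C w (w ⟨k, hk⟩) (w ⟨k, hk⟩) = 0 := if_pos rfl
    exact extMut_signTwist hdiag (signTwist_Bc_row_nonpos hoff ⟨k, hk⟩)
      (signTwist_Bc_col_nonneg hoff ⟨k, hk⟩)

end Coxeter

theorem coxeter_sequence_sink_mutations_general {n : ℕ}
    (C : Matrix (Fin n) (Fin n) ℤ)
    (hoff : ∀ i j, i ≠ j → C i j ≤ 0)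
    (w : Equiv.Perm (Fin n)) :
    (coxState C w 0 =
      fun i j => Sum.elim (fun r => Bc C w r j) (fun r => if r = j then -1 else 0) i) ∧
    (∀ k : Fin n, ∀ j : Fin n, coxState C w (k + 1) (Sum.inl (w k)) j ≤ 0) := by
  refine ⟨?_, fun k j => ?_⟩
  · have hsign : coxSign w 0 = -1 := funext fun a => if_pos (Nat.zero_le _)
    rw [coxState_eq_signTwist hoff (Nat.zero_le n), hsign]
    funext i j
    cases i <;> simp [signTwist_apply_inl, signTwist_apply_inr, diagonal_apply]
  · rw [coxState_eq_signTwist hoff k.isLt]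
    exact signTwist_Bc_row_nonpos hoff k j

/-- Sink-mutation periodicity of `B^c`: for a Cartan matrix `C` of Dynkin type
(diagonal `2`, nonpositive symmetrizable off-diagonal entries) and a Coxeter element
`c = c_1 ⋯ c_n`, the composite mutation `μ_{c_1} ∘ ⋯ ∘ μ_{c_n}` applied to `[B^c; I_n]`
yields `[B^c; -I_n]`, and each `μ_{c_k}` in this sequence is a sink mutation (the row
of the matrix it is applied to, at the mutated vertex, is nonpositive). -/
theorem coxeter_sequence_sink_mutations {n : ℕ}
    (C : Matrix (Fin n) (Fin n) ℤ)
    (hdiag : ∀ i, C i i = 2)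
    (hoff : ∀ i j, i ≠ j → C i j ≤ 0)
    (hzero : ∀ i j, C i j = 0 ↔ C j i = 0)
    (hsym : ∃ d : Fin n → ℤ, (∀ i, 0 < d i) ∧ ∀ i j, d i * C i j = d j * C j i)
    (w : Equiv.Perm (Fin n)) :
    (coxState C w 0 =
      fun i j => Sum.elim (fun r => Bc C w r j) (fun r => if r = j then -1 else 0) i) ∧
    (∀ k : Fin n, ∀ j : Fin n, coxState C w (k + 1) (Sum.inl (w k)) j ≤ 0) :=
  coxeter_sequence_sink_mutations_general C hoff w
end
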